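/- arXiv:2205.15953 — 5 statements merged into one kernel-verified Lean document; each statement's English description precedes it below -/
import Mathlib

section
/- Let v* be the unique fixed point of the optimal Bellman operator T*. For every stationary policy pair (ρ, g), the unique fixed point v^{ρ,g} of the policy-evaluation operator T_{ρ,g} satisfies v^{ρ,g}(s) ≤ v*(s) for every state s; that is, the fixed point of T* dominates the value of every stationary policy pair. -/
open Finset

/-- The optimal impulse-control Bellman operator `T*`. -/
noncomputable def optBellmanOp {S A : Type*} [Fintype S] [Fintype A] [Nonempty A]
    (a₀ : A) (P : S → A → S → ℝ) (R c : S → A → ℝ) (γ : ℝ)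
    (v : S → ℝ) (s : S) : ℝ :=
  max (Finset.univ.sup' Finset.univ_nonempty
        (fun a => R s a - c s a + γ * ∑ s', P s a s' * v s'))
      (R s a₀ + γ * ∑ s', P s a₀ s' * v s')

/-- Policy-evaluation operator `T_{ρ,g}` for a stationary policy pair `(ρ, g)`. -/
noncomputable def policyEvalOp {S A : Type*} [Fintype S] [Fintype A]
    (a₀ : A) (P : S → A → S → ℝ) (R c : S → A → ℝ) (γ : ℝ)
    (ρ : S → A → ℝ) (g : S → Bool) (v : S → ℝ) (s : S) : ℝ :=
  if g s then ∑ a, ρ s a * (R s a - c s a + γ * ∑ s', P s a s' * v s')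
  else R s a₀ + γ * ∑ s', P s a₀ s' * v s'

/-- The fixed point `v*` of `T*` dominates the value `v^{ρ,g}` of every
stationary policy pair `(ρ, g)` pointwise. -/
theorem fixedPoint_optBellmanOp_dominates
    {S A : Type*} [Fintype S] [Nonempty S] [Fintype A] [Nonempty A]
    (a₀ : A) (P : S → A → S → ℝ) (R c : S → A → ℝ) (γ : ℝ)
    (hP0 : ∀ s a s', 0 ≤ P s a s') (hP1 : ∀ s a, ∑ s', P s a s' = 1)
    (hc : ∀ s a, 0 ≤ c s a) (hγ0 : 0 ≤ γ) (hγ1 : γ < 1)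
    (vstar : S → ℝ) (hvstar : optBellmanOp a₀ P R c γ vstar = vstar)
    (ρ : S → A → ℝ) (g : S → Bool)
    (hρ0 : ∀ s a, 0 ≤ ρ s a) (hρ1 : ∀ s, ∑ a, ρ s a = 1)
    (v : S → ℝ) (hv : policyEvalOp a₀ P R c γ ρ g v = v) :
    ∀ s, v s ≤ vstar s := by
  set M : ℝ := Finset.univ.sup' Finset.univ_nonempty (fun s => v s - vstar s) with hM
  obtain ⟨s₀, -, hs₀⟩ := Finset.exists_mem_eq_sup' (Finset.univ_nonempty (α := S))
    (fun s => v s - vstar s)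
  have hle : ∀ s, v s - vstar s ≤ M := fun s =>
    Finset.le_sup' (fun s => v s - vstar s) (Finset.mem_univ s)
  -- key: for any s, a: γ * ∑ P v ≤ γ * ∑ P vstar + γ * M
  have hkey : ∀ s a, γ * ∑ s', P s a s' * v s' ≤ γ * (∑ s', P s a s' * vstar s') + γ * M := by
    intro s a
    have h1 : ∑ s', P s a s' * v s' ≤ ∑ s', P s a s' * (vstar s' + M) := by
      apply Finset.sum_le_sum
      intro s' _
      exact mul_le_mul_of_nonneg_left (by linarith [hle s']) (hP0 s a s')
    have h2 : ∑ s', P s a s' * (vstar s' + M) = (∑ s', P s a s' * vstar s') + M := by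
      simp only [mul_add, Finset.sum_add_distrib, ← Finset.sum_mul, hP1 s a, one_mul]
    calc γ * ∑ s', P s a s' * v s' ≤ γ * ((∑ s', P s a s' * vstar s') + M) := by
          apply mul_le_mul_of_nonneg_left _ hγ0; rw [← h2]; exact h1
      _ = γ * (∑ s', P s a s' * vstar s') + γ * M := by ring
  have hfix : ∀ s, policyEvalOp a₀ P R c γ ρ g v s = v s := fun s => congrFun hv s
  have hfixstar : ∀ s, optBellmanOp a₀ P R c γ vstar s = vstar s := fun s => congrFun hvstar s
  have hMle : M ≤ γ * M := by
    have h := hfix s₀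
    unfold policyEvalOp at h
    have hstar := hfixstar s₀
    unfold optBellmanOp at hstar
    by_cases hg : g s₀ = true
    · rw [if_pos hg] at h
      have h3 : v s₀ ≤ (∑ a, ρ s₀ a * (R s₀ a - c s₀ a + γ * ∑ s', P s₀ a s' * vstar s'))
          + γ * M := by
        rw [← h]
        have : ∀ a ∈ Finset.univ, ρ s₀ a * (R s₀ a - c s₀ a + γ * ∑ s', P s₀ a s' * v s')
            ≤ ρ s₀ a * (R s₀ a - c s₀ a + γ * (∑ s', P s₀ a s' * vstar s') + γ * M) := by
          intro a _
          exact mul_le_mul_of_nonneg_left (by linarith [hkey s₀ a]) (hρ0 s₀ a)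
        calc ∑ a, ρ s₀ a * (R s₀ a - c s₀ a + γ * ∑ s', P s₀ a s' * v s')
            ≤ ∑ a, ρ s₀ a * (R s₀ a - c s₀ a + γ * (∑ s', P s₀ a s' * vstar s') + γ * M) :=
              Finset.sum_le_sum this
          _ = (∑ a, ρ s₀ a * (R s₀ a - c s₀ a + γ * ∑ s', P s₀ a s' * vstar s')) + γ * M := by
              simp only [mul_add, Finset.sum_add_distrib, ← Finset.sum_mul, hρ1 s₀, one_mul]
      have h4 : (∑ a, ρ s₀ a * (R s₀ a - c s₀ a + γ * ∑ s', P s₀ a s' * vstar s'))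
          ≤ vstar s₀ := by
        rw [← hstar]
        refine le_trans ?_ (le_max_left _ _)
        calc ∑ a, ρ s₀ a * (R s₀ a - c s₀ a + γ * ∑ s', P s₀ a s' * vstar s')
            ≤ ∑ a, ρ s₀ a * (Finset.univ.sup' Finset.univ_nonempty
                (fun a => R s₀ a - c s₀ a + γ * ∑ s', P s₀ a s' * vstar s')) := by
              apply Finset.sum_le_sum
              intro a _
              exact mul_le_mul_of_nonneg_left
                (Finset.le_sup' (fun a => R s₀ a - c s₀ a + γ * ∑ s', P s₀ a s' * vstar s')
                  (Finset.mem_univ a)) (hρ0 s₀ a)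
          _ = _ := by rw [← Finset.sum_mul, hρ1 s₀, one_mul]
      calc M = v s₀ - vstar s₀ := hM.trans hs₀
        _ ≤ γ * M := by linarith
    · rw [if_neg hg] at h
      have h3 : v s₀ ≤ (R s₀ a₀ + γ * ∑ s', P s₀ a₀ s' * vstar s') + γ * M := by
        rw [← h]; linarith [hkey s₀ a₀]
      have h4 : R s₀ a₀ + γ * ∑ s', P s₀ a₀ s' * vstar s' ≤ vstar s₀ := by
        rw [← hstar]; exact le_max_right _ _
      calc M = v s₀ - vstar s₀ := hM.trans hs₀
        _ ≤ γ * M := by linarith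
  have hM0 : M ≤ 0 := by nlinarith
  intro s
  linarith [hle s]
end

section
/- The impulse-control Q-learning Bellman operator 𝒯 is a γ-contraction in the sup norm: for all Q, Q' : S × A → ℝ, max_{(s,a)} |(𝒯 Q)(s,a) − (𝒯 Q')(s,a)| ≤ γ · max_{(s,a)} |Q(s,a) − Q'(s,a)|. Consequently 𝒯 has a unique fixed point Q*. -/
/-!
Maximizing over actions, averaging against the probability vector `P s a`, and taking the
maximum of two quantities are all `1`-Lipschitz for the sup norm, and `Q` enters `𝒯 Q` only
through terms multiplied by `γ`. Hence `𝒯` is `γ`-Lipschitz on the complete space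
`S × A → ℝ` with its sup metric, and the Banach fixed point theorem gives `Q*`.
-/

open Finset

/-- Intervention operator on Q-functions. -/
noncomputable def qInterventionOp {S A : Type*} [Fintype S] [Fintype A] [Nonempty A]
    (P : S → A → S → ℝ) (R c : S → A → ℝ) (γ : ℝ)
    (Q : S × A → ℝ) (s : S) (a : A) : ℝ :=
  R s a - c s a + γ * ∑ s'', P s a s'' *
    Finset.univ.sup' Finset.univ_nonempty (fun a'' => Q (s'', a''))

/-- The impulse-control Q-learning Bellman operator `𝒯`. -/
noncomputable def qBellmanOp {S A : Type*} [Fintype S] [Fintype A] [Nonempty A]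
    (a₀ : A) (P : S → A → S → ℝ) (R c : S → A → ℝ) (γ : ℝ)
    (Q : S × A → ℝ) (p : S × A) : ℝ :=
  ∑ s', P p.1 p.2 s' *
    max (qInterventionOp P R c γ Q p.1 p.2)
      (R p.1 a₀ + γ * Finset.univ.sup' Finset.univ_nonempty (fun a' => Q (s', a')))

lemma abs_sup'_sub_sup'_le {ι : Type*} {s : Finset ι} (hs : s.Nonempty) {f g : ι → ℝ} {D : ℝ}
    (h : ∀ i ∈ s, |f i - g i| ≤ D) : |s.sup' hs f - s.sup' hs g| ≤ D := by
  rw [abs_sub_le_iff, sub_le_iff_le_add, sub_le_iff_le_add]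
  constructor
  · refine sup'_le _ _ fun i hi => ?_
    linarith [le_sup' g hi, (abs_sub_le_iff.1 (h i hi)).1]
  · refine sup'_le _ _ fun i hi => ?_
    linarith [le_sup' f hi, (abs_sub_le_iff.1 (h i hi)).2]

lemma abs_sum_mul_sub_sum_mul_le {ι : Type*} {s : Finset ι} {w f g : ι → ℝ} {D : ℝ}
    (hw0 : ∀ i ∈ s, 0 ≤ w i) (hw1 : ∑ i ∈ s, w i = 1) (h : ∀ i ∈ s, |f i - g i| ≤ D) :
    |∑ i ∈ s, w i * f i - ∑ i ∈ s, w i * g i| ≤ D := by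
  rw [← sum_sub_distrib]
  calc |∑ i ∈ s, (w i * f i - w i * g i)| ≤ ∑ i ∈ s, |w i * f i - w i * g i| :=
        abs_sum_le_sum_abs _ _
    _ ≤ ∑ i ∈ s, w i * D := sum_le_sum fun i hi => by
        rw [← mul_sub, abs_mul, abs_of_nonneg (hw0 i hi)]
        exact mul_le_mul_of_nonneg_left (h i hi) (hw0 i hi)
    _ = D := by rw [← sum_mul, hw1, one_mul]

lemma abs_add_mul_sub_add_mul_le (b : ℝ) {γ x y D : ℝ} (hγ : 0 ≤ γ) (h : |x - y| ≤ D) :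
    |b + γ * x - (b + γ * y)| ≤ γ * D := by
  rw [add_sub_add_left_eq_sub, ← mul_sub, abs_mul, abs_of_nonneg hγ]
  exact mul_le_mul_of_nonneg_left h hγ

lemma sup'_abs_sub_eq_dist {ι : Type*} [Fintype ι] [Nonempty ι] (f g : ι → ℝ) :
    univ.sup' univ_nonempty (fun i => |f i - g i|) = dist f g := by
  refine le_antisymm (sup'_le _ _ fun i _ => ?_) (dist_pi_le_iff'.2 fun i => ?_)
  · exact (Real.dist_eq (f i) (g i)).symm.le.trans (dist_le_pi_dist f g i)
  · exact (Real.dist_eq (f i) (g i)).le.trans (le_sup' (fun i => |f i - g i|) (mem_univ i))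

section Bellman

variable {S A : Type*} [Fintype S] [Fintype A] [Nonempty A]

lemma abs_sup'_sub_sup'_le_dist (Q Q' : S × A → ℝ) (s : S) :
    |univ.sup' univ_nonempty (fun a => Q (s, a)) - univ.sup' univ_nonempty (fun a => Q' (s, a))|
      ≤ dist Q Q' :=
  abs_sup'_sub_sup'_le _ fun a _ => (Real.dist_eq _ _).symm.le.trans (dist_le_pi_dist Q Q' (s, a))

variable {P : S → A → S → ℝ} {γ : ℝ}

lemma abs_qInterventionOp_sub_le (R c : S → A → ℝ) (hP0 : ∀ s a s', 0 ≤ P s a s')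
    (hP1 : ∀ s a, ∑ s', P s a s' = 1) (hγ : 0 ≤ γ) (Q Q' : S × A → ℝ) (s : S) (a : A) :
    |qInterventionOp P R c γ Q s a - qInterventionOp P R c γ Q' s a| ≤ γ * dist Q Q' :=
  abs_add_mul_sub_add_mul_le _ hγ <| abs_sum_mul_sub_sum_mul_le (fun s' _ => hP0 s a s')
    (hP1 s a) fun s' _ => abs_sup'_sub_sup'_le_dist Q Q' s'

lemma dist_qBellmanOp_apply_le (a₀ : A) (R c : S → A → ℝ) (hP0 : ∀ s a s', 0 ≤ P s a s')
    (hP1 : ∀ s a, ∑ s', P s a s' = 1) (hγ : 0 ≤ γ) (Q Q' : S × A → ℝ) (p : S × A) :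
    dist (qBellmanOp a₀ P R c γ Q p) (qBellmanOp a₀ P R c γ Q' p) ≤ γ * dist Q Q' := by
  rw [Real.dist_eq]
  refine abs_sum_mul_sub_sum_mul_le (fun s' _ => hP0 _ _ s') (hP1 _ _) fun s' _ =>
    (abs_max_sub_max_le_max _ _ _ _).trans (max_le ?_ ?_)
  · exact abs_qInterventionOp_sub_le R c hP0 hP1 hγ Q Q' p.1 p.2
  · exact abs_add_mul_sub_add_mul_le _ hγ (abs_sup'_sub_sup'_le_dist Q Q' s')

lemma lipschitzWith_qBellmanOp (a₀ : A) (R c : S → A → ℝ) (hP0 : ∀ s a s', 0 ≤ P s a s')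
    (hP1 : ∀ s a, ∑ s', P s a s' = 1) (hγ : 0 ≤ γ) :
    LipschitzWith ⟨γ, hγ⟩ (qBellmanOp a₀ P R c γ) :=
  LipschitzWith.of_dist_le_mul fun Q Q' => (dist_pi_le_iff (by positivity)).2 fun p =>
    dist_qBellmanOp_apply_le a₀ R c hP0 hP1 hγ Q Q' p

end Bellman

theorem qBellmanOp_contraction_unique_fixedPoint_general
    {S A : Type*} [Fintype S] [Nonempty S] [Fintype A] [Nonempty A]
    (a₀ : A) (P : S → A → S → ℝ) (R c : S → A → ℝ) (γ : ℝ)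
    (hP0 : ∀ s a s', 0 ≤ P s a s') (hP1 : ∀ s a, ∑ s', P s a s' = 1)
    (hγ0 : 0 ≤ γ) (hγ1 : γ < 1) :
    (∀ Q Q' : S × A → ℝ,
      Finset.univ.sup' Finset.univ_nonempty
          (fun p : S × A => |qBellmanOp a₀ P R c γ Q p - qBellmanOp a₀ P R c γ Q' p|) ≤
        γ * Finset.univ.sup' Finset.univ_nonempty (fun p : S × A => |Q p - Q' p|)) ∧
    (∃! Qstar : S × A → ℝ, qBellmanOp a₀ P R c γ Qstar = Qstar) := by
  have hT := lipschitzWith_qBellmanOp a₀ R c hP0 hP1 hγ0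
  have hK : ContractingWith ⟨γ, hγ0⟩ (qBellmanOp a₀ P R c γ) := ⟨hγ1, hT⟩
  refine ⟨fun Q Q' => ?_, ⟨_, hK.fixedPoint_isFixedPt, fun Q hQ => hK.fixedPoint_unique hQ⟩⟩
  rw [sup'_abs_sub_eq_dist (qBellmanOp a₀ P R c γ Q), sup'_abs_sub_eq_dist Q Q']
  exact hT.dist_le_mul Q Q'

/-- `𝒯` is a `γ`-contraction in the sup norm, hence has a unique fixed point `Q*`. -/
theorem qBellmanOp_contraction_unique_fixedPoint
    {S A : Type*} [Fintype S] [Nonempty S] [Fintype A] [Nonempty A]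
    (a₀ : A) (P : S → A → S → ℝ) (R c : S → A → ℝ) (γ : ℝ)
    (hP0 : ∀ s a s', 0 ≤ P s a s') (hP1 : ∀ s a, ∑ s', P s a s' = 1)
    (hc : ∀ s a, 0 ≤ c s a) (hγ0 : 0 ≤ γ) (hγ1 : γ < 1) :
    (∀ Q Q' : S × A → ℝ,
      Finset.univ.sup' Finset.univ_nonempty
          (fun p : S × A => |qBellmanOp a₀ P R c γ Q p - qBellmanOp a₀ P R c γ Q' p|) ≤
        γ * Finset.univ.sup' Finset.univ_nonempty (fun p : S × A => |Q p - Q' p|)) ∧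
    (∃! Qstar : S × A → ℝ, qBellmanOp a₀ P R c γ Qstar = Qstar) :=
  qBellmanOp_contraction_unique_fixedPoint_general a₀ P R c γ hP0 hP1 hγ0 hγ1
end

section
/- Let H be a real Hilbert space, K a complete subspace of H, Π_K : H → K the orthogonal projection onto K, γ ∈ [0,1), and F : H → H a map satisfying ‖F x − F y‖ ≤ γ · ‖x − y‖ for all x, y ∈ H. Suppose Q* ∈ H satisfies F Q* = Q* and q* ∈ K satisfies Π_K(F q*) = q*. Then ‖q* − Q*‖ ≤ (1 − γ²)^{−1/2} · ‖Π_K Q* − Q*‖. -/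
/-!
The error `q* − Q*` splits orthogonally into `q* − Π_K Q* ∈ K` and `Π_K Q* − Q* ∈ Kᗮ`. Since
`q* = Π_K (F q*)` and `Π_K Q* = Π_K (F Q*)`, and `Π_K` is non-expansive, the first component has
norm at most `γ ‖q* − Q*‖`; Pythagoras then gives `(1 − γ²) ‖q* − Q*‖² ≤ ‖Π_K Q* − Q*‖²`.
-/

theorem le_inv_sqrt_one_sub_sq_mul_of_sq_eq_add_sq {a b c γ : ℝ} (hγ0 : 0 ≤ γ) (hγ1 : γ < 1)
    (hb : 0 ≤ b) (hba : b ≤ γ * a) (hc : 0 ≤ c) (habc : a ^ 2 = b ^ 2 + c ^ 2) :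
    a ≤ (√(1 - γ ^ 2))⁻¹ * c := by
  have hγ : 0 < 1 - γ ^ 2 := by nlinarith
  have hsq : (√(1 - γ ^ 2) * a) ^ 2 ≤ c ^ 2 := by
    rw [mul_pow, Real.sq_sqrt hγ.le]
    nlinarith
  rw [inv_mul_eq_div, le_div_iff₀ (Real.sqrt_pos.mpr hγ), mul_comm]
  exact le_of_sq_le_sq hsq hc

namespace Submodule

variable {𝕜 E : Type*} [RCLike 𝕜] [NormedAddCommGroup E] [InnerProductSpace 𝕜 E]
  (K : Submodule 𝕜 E) [K.HasOrthogonalProjection]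

theorem norm_sub_sq_eq_norm_sub_starProjection_sq_add {x : E} (hx : x ∈ K) (y : E) :
    ‖x - y‖ ^ 2 = ‖x - K.starProjection y‖ ^ 2 + ‖K.starProjection y - y‖ ^ 2 := by
  have horth : inner 𝕜 (x - K.starProjection y) (K.starProjection y - y) = 0 := by
    rw [← neg_sub y, inner_neg_right, neg_eq_zero]
    exact K.sub_starProjection_mem_orthogonal y _ (K.sub_mem hx (K.starProjection_apply_mem y))
  simpa only [sq, sub_add_sub_cancel] using
    norm_add_sq_eq_norm_sq_add_norm_sq_of_inner_eq_zero _ _ horth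

theorem norm_starProjection_sub_le (x y : E) :
    ‖K.starProjection x - K.starProjection y‖ ≤ ‖x - y‖ := by
  simpa only [map_sub] using K.norm_starProjection_apply_le (x - y)

end Submodule

/-- Approximation-error bound for the fixed point of the projected contraction:
`‖q* − Q*‖ ≤ (1 − γ²)^{−1/2} · ‖Π_K Q* − Q*‖`. -/
theorem projected_fixedPoint_error_bound
    {H : Type*} [NormedAddCommGroup H] [InnerProductSpace ℝ H]
    (K : Submodule ℝ H) [CompleteSpace K]
    (γ : ℝ) (hγ0 : 0 ≤ γ) (hγ1 : γ < 1)
    (F : H → H) (hF : ∀ x y : H, ‖F x - F y‖ ≤ γ * ‖x - y‖)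
    (Qstar : H) (hQstar : F Qstar = Qstar)
    (qstar : K) (hqstar : K.orthogonalProjection (F qstar) = qstar) :
    ‖(qstar : H) - Qstar‖ ≤
      (Real.sqrt (1 - γ ^ 2))⁻¹ * ‖(K.orthogonalProjection Qstar : H) - Qstar‖ := by
  have hq : K.starProjection (F qstar) = qstar := congrArg Subtype.val hqstar
  have hcontr : ‖(qstar : H) - K.starProjection Qstar‖ ≤ γ * ‖(qstar : H) - Qstar‖ := by
    calc ‖(qstar : H) - K.starProjection Qstar‖
        = ‖K.starProjection (F qstar) - K.starProjection (F Qstar)‖ := by rw [hq, hQstar]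
      _ ≤ ‖F qstar - F Qstar‖ := K.norm_starProjection_sub_le _ _
      _ ≤ γ * ‖(qstar : H) - Qstar‖ := hF _ _
  rw [Submodule.coe_orthogonalProjectionOnto_apply]
  exact le_inv_sqrt_one_sub_sq_mul_of_sq_eq_add_sq hγ0 hγ1 (norm_nonneg _) hcontr (norm_nonneg _)
    (K.norm_sub_sq_eq_norm_sub_starProjection_sq_add qstar.2 Qstar)
end

section
/- Let H be a real Hilbert space, K a complete subspace of H, Π_K : H → K the orthogonal projection onto K, γ ∈ [0,1), and F : H → H a map satisfying ‖F x − F y‖ ≤ γ · ‖x − y‖ for all x, y ∈ H. Suppose q* ∈ K satisfies Π_K(F q*) = q*. Then for every q ∈ K, ⟪q − q*, F q − q⟫ ≤ (γ − 1) · ‖q − q*‖²; in particular, if q ≠ q* then ⟪q − q*, F q − q⟫ < 0. -/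
/-!
Write `d = q - q*`. Splitting `F q - q = (F q - F q*) + (F q* - q*) - d`, the middle term is
orthogonal to `d ∈ K` because `q*` is the projection of `F q*` onto `K`, the first contributes at
most `γ‖d‖²` by Cauchy–Schwarz and the contraction bound, and the last contributes `-‖d‖²`.
-/

open scoped RealInnerProductSpace

section

variable {H : Type*} [NormedAddCommGroup H] [InnerProductSpace ℝ H]

theorem Submodule.sub_mem_orthogonal_of_orthogonalProjectionOnto_eq (K : Submodule ℝ H)
    [K.HasOrthogonalProjection] {x : H} {p : K} (h : K.orthogonalProjectionOnto x = p) :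
    x - p ∈ Kᗮ := by
  simpa [Submodule.starProjection_apply, h] using K.sub_starProjection_mem_orthogonal x

theorem real_inner_sub_map_sub_le {γ : ℝ} {F : H → H}
    (hF : ∀ x y : H, ‖F x - F y‖ ≤ γ * ‖x - y‖) (x y : H) :
    ⟪x - y, F x - F y⟫ ≤ γ * ‖x - y‖ ^ 2 :=
  calc ⟪x - y, F x - F y⟫ ≤ ‖x - y‖ * ‖F x - F y‖ := real_inner_le_norm _ _
    _ ≤ ‖x - y‖ * (γ * ‖x - y‖) := mul_le_mul_of_nonneg_left (hF x y) (norm_nonneg _)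
    _ = γ * ‖x - y‖ ^ 2 := by ring

theorem real_inner_sub_map_sub_self_le {γ : ℝ} {F : H → H}
    (hF : ∀ x y : H, ‖F x - F y‖ ≤ γ * ‖x - y‖) {x y : H} (horth : ⟪x - y, F y - y⟫ = 0) :
    ⟪x - y, F x - x⟫ ≤ (γ - 1) * ‖x - y‖ ^ 2 := by
  have hsplit : F x - x = (F x - F y) + (F y - y) - (x - y) := by abel
  rw [hsplit, inner_sub_right, inner_add_right, horth, real_inner_self_eq_norm_sq]
  linarith [real_inner_sub_map_sub_le hF x y]

end

theorem projected_fixedPoint_iteration_property_general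
    {H : Type*} [NormedAddCommGroup H] [InnerProductSpace ℝ H]
    (K : Submodule ℝ H) [CompleteSpace K]
    (γ : ℝ) (hγ1 : γ < 1)
    (F : H → H) (hF : ∀ x y : H, ‖F x - F y‖ ≤ γ * ‖x - y‖)
    (qstar : K) (hqstar : K.orthogonalProjectionOnto (F qstar) = qstar) :
    ∀ q : K,
      ⟪(q : H) - qstar, F q - q⟫ ≤ (γ - 1) * ‖(q : H) - (qstar : H)‖ ^ 2 ∧
      (q ≠ qstar → ⟪(q : H) - qstar, F q - q⟫ < 0) := by
  intro q
  have key : ⟪(q : H) - qstar, F q - q⟫ ≤ (γ - 1) * ‖(q : H) - (qstar : H)‖ ^ 2 :=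
    real_inner_sub_map_sub_self_le hF <| Submodule.inner_right_of_mem_orthogonal
      (K.sub_mem q.2 qstar.2) (K.sub_mem_orthogonal_of_orthogonalProjectionOnto_eq hqstar)
  refine ⟨key, fun hne => key.trans_lt (mul_neg_of_neg_of_pos (by linarith) ?_)⟩
  exact pow_pos (norm_pos_iff.2 (sub_ne_zero.2 (Subtype.coe_ne_coe.2 hne))) 2

/-- Iteration property: the mean update direction `⟪q − q*, F q − q⟫` is bounded by
`(γ − 1)‖q − q*‖²`, and is strictly negative whenever `q ≠ q*`. -/
theorem projected_fixedPoint_iteration_property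
    {H : Type*} [NormedAddCommGroup H] [InnerProductSpace ℝ H]
    (K : Submodule ℝ H) [CompleteSpace K]
    (γ : ℝ) (hγ0 : 0 ≤ γ) (hγ1 : γ < 1)
    (F : H → H) (hF : ∀ x y : H, ‖F x - F y‖ ≤ γ * ‖x - y‖)
    (qstar : K) (hqstar : K.orthogonalProjectionOnto (F qstar) = qstar) :
    ∀ q : K,
      ⟪(q : H) - qstar, F q - q⟫ ≤ (γ - 1) * ‖(q : H) - (qstar : H)‖ ^ 2 ∧
      (q ≠ qstar → ⟪(q : H) - qstar, F q - q⟫ < 0) :=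
  projected_fixedPoint_iteration_property_general K γ hγ1 F hF qstar hqstar
end

section
/- Let X be a real normed vector space, γ ∈ [0,1), and let F, G : X → X satisfy ‖F x − F y‖ ≤ γ‖x − y‖ and ‖G x − G y‖ ≤ γ‖x − y‖ for all x, y ∈ X. Suppose Q* ∈ X satisfies F Q* = Q*, Q̃ ∈ X satisfies G Q̃ = Q̃, and there is a point p ∈ X with F p = G p. Then ‖Q̃ − Q*‖ ≤ 2(1 − γ)^{−1} · ‖Q̃ − p‖. -/
/-- Comparison of fixed points of two `γ`-contractions agreeing at a point `p`:
`‖Q̃ − Q*‖ ≤ 2(1 − γ)⁻¹ ‖Q̃ − p‖`. -/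
theorem fixedPoint_comparison
    {X : Type*} [NormedAddCommGroup X] [NormedSpace ℝ X]
    (γ : ℝ) (hγ0 : 0 ≤ γ) (hγ1 : γ < 1)
    (F G : X → X)
    (hF : ∀ x y : X, ‖F x - F y‖ ≤ γ * ‖x - y‖)
    (hG : ∀ x y : X, ‖G x - G y‖ ≤ γ * ‖x - y‖)
    (Qstar Qtilde p : X)
    (hQstar : F Qstar = Qstar) (hQtilde : G Qtilde = Qtilde) (hp : F p = G p) :
    ‖Qtilde - Qstar‖ ≤ 2 * (1 - γ)⁻¹ * ‖Qtilde - p‖ := by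
  have h1γ : (0:ℝ) < 1 - γ := by linarith
  -- ‖p - F p‖ ≤ (1+γ)‖Qtilde - p‖
  have hpF : ‖p - F p‖ ≤ (1 + γ) * ‖Qtilde - p‖ := by
    have : ‖p - F p‖ ≤ ‖p - Qtilde‖ + ‖G Qtilde - G p‖ := by
      calc ‖p - F p‖ = ‖(p - Qtilde) + (G Qtilde - G p)‖ := by
            rw [hp, hQtilde]; congr 1; abel
        _ ≤ ‖p - Qtilde‖ + ‖G Qtilde - G p‖ := norm_add_le _ _
    have h2 := hG Qtilde p
    have h3 : ‖p - Qtilde‖ = ‖Qtilde - p‖ := norm_sub_rev _ _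
    linarith
  -- ‖p - Qstar‖ ≤ (1-γ)⁻¹ ‖p - F p‖
  have hpQ : (1 - γ) * ‖p - Qstar‖ ≤ ‖p - F p‖ := by
    have : ‖p - Qstar‖ ≤ ‖p - F p‖ + ‖F p - F Qstar‖ := by
      calc ‖p - Qstar‖ = ‖(p - F p) + (F p - F Qstar)‖ := by rw [hQstar]; congr 1; abel
        _ ≤ _ := norm_add_le _ _
    have h2 := hF p Qstar
    nlinarith
  have htri : ‖Qtilde - Qstar‖ ≤ ‖Qtilde - p‖ + ‖p - Qstar‖ := norm_sub_le_norm_sub_add_norm_sub _ _ _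
  have hnn : (0:ℝ) ≤ ‖Qtilde - p‖ := norm_nonneg _
  rw [mul_comm 2 _, mul_assoc, ← div_eq_inv_mul, le_div_iff₀ h1γ] at *
  nlinarith
end
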